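/- Let f : ℂ → ℂ be entire with f(0) = f(2) = 0, let g(x) = -1/4 - f(x) + (1/8)e^{-πix}, and define P(x₁,x₂) = 1/4 + e^{πix₂}f(x₁) + e^{πix₁}f(x₂) + e^{-πix₂}g(x₁) + e^{-πix₁}g(x₂). Then P(x₁,0) = P(x₁,2) = P(0,x₂) = P(2,x₂) = 0 for all real x₁, x₂, and ∑_{n∈{0,1}²} P(x+n) = 1 for all x ∈ ℝ². -/

import Mathlib

/-! Shifting a variable by 1 flips the sign of every exponential `exp (± π i x)`, so in the sum
over the four shifts each non-constant term of `P` cancels against its shifted copy and only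
`4 · 1/4` remains. On the boundary lines `x = 0` and `x = 2` the exponentials equal 1 and
`f = 0`, so `g = -1/8` there, and the choice of `g` makes `P` vanish. -/

open Complex

lemma exp_pi_mul_I_mul_add_one (x : ℂ) :
    exp (Real.pi * I * (x + 1)) = -exp (Real.pi * I * x) := by
  rw [mul_add, mul_one, exp_add_pi_mul_I]

lemma exp_neg_pi_mul_I_mul_add_one (x : ℂ) :
    exp (-(Real.pi * I * (x + 1))) = -exp (-(Real.pi * I * x)) := by
  rw [mul_add, mul_one, neg_add, ← sub_eq_add_neg, exp_sub_pi_mul_I]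

lemma exp_pi_mul_I_mul_two : exp (Real.pi * I * 2) = 1 := by
  rw [mul_comm, ← mul_assoc, exp_two_pi_mul_I]

namespace NonperiodicPOU

variable {f g : ℂ → ℂ} {P : ℂ → ℂ → ℂ}
  (hP : ∀ x₁ x₂ : ℂ, P x₁ x₂ = 1 / 4 +
    exp (Real.pi * I * x₂) * f x₁ + exp (Real.pi * I * x₁) * f x₂ +
    exp (-(Real.pi * I * x₂)) * g x₁ + exp (-(Real.pi * I * x₁)) * g x₂)
include hP

lemma apply_comm (x₁ x₂ : ℂ) : P x₁ x₂ = P x₂ x₁ := by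
  rw [hP, hP]
  ring

lemma sum_shifts_eq_one (x₁ x₂ : ℂ) :
    P x₁ x₂ + P (x₁ + 1) x₂ + P x₁ (x₂ + 1) + P (x₁ + 1) (x₂ + 1) = 1 := by
  simp only [hP, exp_pi_mul_I_mul_add_one, exp_neg_pi_mul_I_mul_add_one]
  ring

variable (hg : ∀ x : ℂ, g x = -1 / 4 - f x + (1 / 8) * exp (-(Real.pi * I * x)))
  {a : ℂ} (ha : exp (Real.pi * I * a) = 1) (hfa : f a = 0)
include hg ha hfa

lemma apply_eq_zero_of_exp_eq_one (x : ℂ) : P x a = 0 := by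
  have ha' : exp (-(Real.pi * I * a)) = 1 := by rw [exp_neg, ha, inv_one]
  rw [hP, hg x, hg a, ha, ha', hfa]
  ring

end NonperiodicPOU

theorem nonperiodic_pou_vanishing_boundary_general (f : ℂ → ℂ)
    (hf0 : f 0 = 0) (hf2 : f 2 = 0) (g : ℂ → ℂ)
    (hg : ∀ x : ℂ, g x = -1 / 4 - f x + (1 / 8) * Complex.exp (-(Real.pi * Complex.I * x)))
    (P : ℂ → ℂ → ℂ)
    (hP : ∀ x₁ x₂ : ℂ, P x₁ x₂ = 1 / 4 +
      Complex.exp (Real.pi * Complex.I * x₂) * f x₁ +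
      Complex.exp (Real.pi * Complex.I * x₁) * f x₂ +
      Complex.exp (-(Real.pi * Complex.I * x₂)) * g x₁ +
      Complex.exp (-(Real.pi * Complex.I * x₁)) * g x₂) :
    (∀ x₁ : ℝ, P x₁ 0 = 0 ∧ P x₁ 2 = 0) ∧
    (∀ x₂ : ℝ, P 0 x₂ = 0 ∧ P 2 x₂ = 0) ∧
    (∀ x₁ x₂ : ℝ,
      P x₁ x₂ + P (x₁ + 1) x₂ + P x₁ (x₂ + 1) + P (x₁ + 1) (x₂ + 1) = 1) := by
  open NonperiodicPOU in
  have h0 : exp (Real.pi * I * 0) = 1 := by rw [mul_zero, exp_zero]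
  have h2 := exp_pi_mul_I_mul_two
  exact ⟨fun x₁ => ⟨apply_eq_zero_of_exp_eq_one hP hg h0 hf0 x₁,
      apply_eq_zero_of_exp_eq_one hP hg h2 hf2 x₁⟩,
    fun x₂ => ⟨(apply_comm hP _ _).trans (apply_eq_zero_of_exp_eq_one hP hg h0 hf0 x₂),
      (apply_comm hP _ _).trans (apply_eq_zero_of_exp_eq_one hP hg h2 hf2 x₂)⟩,
    fun x₁ x₂ => sum_shifts_eq_one hP x₁ x₂⟩

theorem nonperiodic_pou_vanishing_boundary (f : ℂ → ℂ) (hf : Differentiable ℂ f)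
    (hf0 : f 0 = 0) (hf2 : f 2 = 0) (g : ℂ → ℂ)
    (hg : ∀ x : ℂ, g x = -1 / 4 - f x + (1 / 8) * Complex.exp (-(Real.pi * Complex.I * x)))
    (P : ℂ → ℂ → ℂ)
    (hP : ∀ x₁ x₂ : ℂ, P x₁ x₂ = 1 / 4 +
      Complex.exp (Real.pi * Complex.I * x₂) * f x₁ +
      Complex.exp (Real.pi * Complex.I * x₁) * f x₂ +
      Complex.exp (-(Real.pi * Complex.I * x₂)) * g x₁ +
      Complex.exp (-(Real.pi * Complex.I * x₁)) * g x₂) :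
    (∀ x₁ : ℝ, P x₁ 0 = 0 ∧ P x₁ 2 = 0) ∧
    (∀ x₂ : ℝ, P 0 x₂ = 0 ∧ P 2 x₂ = 0) ∧
    (∀ x₁ x₂ : ℝ,
      P x₁ x₂ + P (x₁ + 1) x₂ + P x₁ (x₂ + 1) + P (x₁ + 1) (x₂ + 1) = 1) :=
  nonperiodic_pou_vanishing_boundary_general f hf0 hf2 g hg P hP
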